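/- arXiv:1609.03226 — 5 statements merged into one kernel-verified Lean document; each statement's English description precedes it below -/
import Mathlib

section
/- For $1 < r < \infty$ let $\theta_2^* \in [0,\pi/2)$, and define $\theta_r^* = \arctan\frac{\sqrt{(r-2)^2 + r^2 (\tan\theta_2^*)^2}}{2\sqrt{r-1}}$, $\theta_r = \pi/2 - \theta_r^*$, and $\phi_r = \arccos|1 - 2/r|$. Then $\sin\theta_r = \sin\phi_r \cdot \sin\theta_2$, where $\theta_2 = \pi/2 - \theta_2^*$. -/
/-! Both sides equal `2 √(r - 1) cos θ₂* / r`. On the right, `1 - (1 - 2/r)² = 4(r - 1)/r²`.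
On the left, `cos (arctan (√a / b)) = b / √(b² + a)`, and with `b² = 4(r - 1)` the radicand
collapses: `4(r - 1) + (r - 2)² + r² tan² θ = r² (1 + tan² θ) = (r / cos θ)²`. -/

open Real

lemma sin_arccos_abs_one_sub_two_div {r : ℝ} (hr : 1 ≤ r) :
    sin (arccos |1 - 2 / r|) = 2 * √(r - 1) / r := by
  have hr0 : 0 < r := by linarith
  have hr1 : 0 ≤ r - 1 := by linarith
  have h : 1 - |1 - 2 / r| ^ 2 = (2 * √(r - 1) / r) ^ 2 := by
    rw [sq_abs, div_pow, mul_pow, sq_sqrt hr1]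
    field_simp
    ring
  rw [sin_arccos, h, sqrt_sq (by positivity)]

lemma cos_arctan_sqrt_div {a b : ℝ} (ha : 0 ≤ a) (hb : 0 < b) :
    cos (arctan (√a / b)) = b / √(b ^ 2 + a) := by
  have h : 1 + (√a / b) ^ 2 = (√(b ^ 2 + a) / b) ^ 2 := by
    rw [div_pow, div_pow, sq_sqrt ha, sq_sqrt (by positivity)]
    field_simp
  rw [cos_arctan, h, sqrt_sq (by positivity), one_div_div]

lemma sqrt_sq_mul_one_add_tan_sq {r θ : ℝ} (hr : 0 ≤ r) (hθ : 0 < cos θ) :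
    √(r ^ 2 * (1 + tan θ ^ 2)) = r / cos θ := by
  rw [sqrt_mul (sq_nonneg r), sqrt_sq hr, div_eq_mul_inv, ← inv_sqrt_one_add_tan_sq hθ, inv_inv]

theorem stmt_1 (r θ2s : ℝ) (hr : 1 < r) (hθ2 : θ2s ∈ Set.Ico 0 (π/2)) :
    sin (π/2 - arctan (Real.sqrt ((r-2)^2 + r^2 * (tan θ2s)^2) / (2 * Real.sqrt (r-1))))
      = sin (arccos |1 - 2/r|) * sin (π/2 - θ2s) := by
  have hr1 : 0 < r - 1 := by linarith
  have hcos : 0 < cos θ2s := cos_pos_of_mem_Ioo ⟨by linarith [pi_pos, hθ2.1], hθ2.2⟩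
  have hradicand : (2 * √(r - 1)) ^ 2 + ((r - 2) ^ 2 + r ^ 2 * tan θ2s ^ 2)
      = r ^ 2 * (1 + tan θ2s ^ 2) := by
    rw [mul_pow, sq_sqrt hr1.le]
    ring
  rw [sin_pi_div_two_sub, sin_pi_div_two_sub, cos_arctan_sqrt_div (by positivity) (by positivity),
    hradicand, sqrt_sq_mul_one_add_tan_sq (by linarith) hcos,
    sin_arccos_abs_one_sub_two_div hr.le]
  field_simp
end

section
/- For $r \in (1,\infty)\setminus\{2\}$ and $\theta_2^* \in [0,\pi/2)$ with $\theta_2 = \pi/2 - \theta_2^*$, the angle $\theta_r^* = \arctan\frac{\sqrt{(r-2)^2 + r^2(\tan\theta_2^*)^2}}{2\sqrt{r-1}}$ satisfies the strict inequality $\theta_r^* < \theta_2^* + \theta_2\,|1 - 2/r|$. -/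
/-!
Put `a = |1 - 2 / r|`, so that `1 - a ^ 2 = 4 (r - 1) / r ^ 2` and the argument `x` of `arctan`
satisfies `(1 + x ^ 2) (1 - a ^ 2) = 1 + tan² θ = 1 / cos² θ`. For `R = θ + (π / 2 - θ) a` the claim
`arctan x < R` then reduces to `cos R < √(1 - a ^ 2) cos θ`, i.e. with `b = 1 - a`, `φ = π / 2 - θ`,
to `sin (b φ) < √(b (2 - b)) sin φ`. This holds because `sin (b φ) / sin φ` increases on
`(0, π / 2]` (a consequence of `sin x / x` decreasing on `(0, π]`, by concavity of `sin`), and at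
`φ = π / 2` Jordan's inequality `1 - b < sin ((1 - b) π / 2) = cos (b π / 2)` gives
`sin (b π / 2) < √(b (2 - b))`.
-/

open Real Set

namespace Real

theorem strictAntiOn_sin_div : StrictAntiOn (fun x => sin x / x) (Ioc 0 π) := by
  intro x ⟨hx0, _⟩ y ⟨hy0, hyπ⟩ hxy
  have hxy' : x / y < 1 := (div_lt_one hy0).2 hxy
  -- `x = (1 - x / y) • 0 + (x / y) • y` and `sin 0 = 0`
  have hconc := strictConcaveOn_sin_Icc.2 ⟨le_rfl, pi_pos.le⟩ ⟨hy0.le, hyπ⟩ hy0.ne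
    (sub_pos.2 hxy') (div_pos hx0 hy0) (sub_add_cancel 1 (x / y))
  simp only [sin_zero, smul_eq_mul, mul_zero, zero_add, div_mul_cancel₀ x hy0.ne'] at hconc
  rw [div_lt_div_iff₀ hy0 hx0]
  rw [div_mul_eq_mul_div, div_lt_iff₀ hy0] at hconc
  linarith

theorem sin_mul_mul_cos_lt {b t : ℝ} (hb0 : 0 < b) (hb1 : b < 1) (ht0 : 0 < t)
    (ht : (1 + b) * t ≤ π) : sin (b * t) * cos t < b * cos (b * t) * sin t := by
  have hlt : sin ((1 + b) * t) / ((1 + b) * t) < sin ((1 - b) * t) / ((1 - b) * t) :=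
    strictAntiOn_sin_div ⟨by nlinarith, by nlinarith⟩ ⟨by nlinarith, ht⟩ (by nlinarith)
  rw [div_lt_div_iff₀ (by nlinarith) (by nlinarith), show (1 + b) * t = t + b * t by ring,
    show (1 - b) * t = t - b * t by ring, sin_add, sin_sub] at hlt
  nlinarith

theorem strictMonoOn_sin_mul_div_sin {b : ℝ} (hb0 : 0 < b) (hb1 : b < 1) :
    StrictMonoOn (fun t => sin (b * t) / sin t) (Ioc 0 (π / 2)) := by
  have hsin : ∀ t ∈ Ioc 0 (π / 2), 0 < sin t := fun t ht =>
    sin_pos_of_pos_of_lt_pi ht.1 (by linarith [ht.2, pi_pos])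
  apply strictMonoOn_of_deriv_pos (convex_Ioc 0 (π / 2))
  · exact ((continuous_sin.comp (continuous_const_mul b)).continuousOn).div
      continuous_sin.continuousOn fun t ht => (hsin t ht).ne'
  · intro t ht
    rw [interior_Ioc] at ht
    have hsint := hsin t (Ioo_subset_Ioc_self ht)
    have hderiv : HasDerivAt (fun t => sin (b * t) / sin t)
        ((cos (b * t) * b * sin t - sin (b * t) * cos t) / sin t ^ 2) t :=
      ((hasDerivAt_const_mul b).sin).div (hasDerivAt_sin t) hsint.ne'
    rw [hderiv.deriv]
    have hnum := sin_mul_mul_cos_lt hb0 hb1 ht.1 (by nlinarith [ht.2, mul_pos (sub_pos.2 hb1) ht.1])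
    exact div_pos (by linarith) (by positivity)

theorem sin_mul_lt_sqrt_mul_sin {b φ : ℝ} (hb0 : 0 < b) (hb1 : b < 1) (hφ0 : 0 < φ)
    (hφ : φ ≤ π / 2) : sin (b * φ) < √(b * (2 - b)) * sin φ := by
  have hsinφ : 0 < sin φ := sin_pos_of_pos_of_lt_pi hφ0 (by linarith [pi_pos])
  have hendpoint : sin (b * (π / 2)) < √(b * (2 - b)) := by
    have hjordan := lt_sin_mul (x := 1 - b) (by linarith) (by linarith)
    rw [show π / 2 * (1 - b) = π / 2 - b * (π / 2) by ring, sin_pi_div_two_sub] at hjordan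
    apply lt_sqrt_of_sq_lt
    nlinarith [sin_sq_add_cos_sq (b * (π / 2))]
  have hmono : sin (b * φ) / sin φ ≤ sin (b * (π / 2)) := by
    simpa only [sin_pi_div_two, div_one] using (strictMonoOn_sin_mul_div_sin hb0 hb1).monotoneOn
      ⟨hφ0, hφ⟩ ⟨pi_div_two_pos, le_rfl⟩ hφ
  rw [div_le_iff₀ hsinφ] at hmono
  exact hmono.trans_lt (mul_lt_mul_of_pos_right hendpoint hsinφ)

theorem arctan_lt_of_cos_sq_mul_lt_one {x R : ℝ} (hR0 : 0 ≤ R) (hR : R < π / 2)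
    (h : cos R ^ 2 * (1 + x ^ 2) < 1) : arctan x < R := by
  have hcos : 0 < cos R := cos_pos_of_mem_Ioo ⟨by linarith [pi_pos], hR⟩
  rw [← inv_one_add_tan_sq hcos.ne', inv_mul_lt_iff₀ (by positivity), mul_one] at h
  have htan : x < tan R :=
    lt_of_pow_lt_pow_left₀ 2 (tan_nonneg_of_nonneg_of_le_pi_div_two hR0 hR.le) (by linarith)
  calc arctan x < arctan (tan R) := arctan_strictMono htan
    _ = R := arctan_tan (by linarith [pi_pos]) hR

theorem arctan_lt_add_sub_mul {a θ x : ℝ} (ha0 : 0 < a) (ha1 : a < 1) (hθ0 : 0 ≤ θ)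
    (hθ : θ < π / 2) (hx : (1 + x ^ 2) * (1 - a ^ 2) = 1 + tan θ ^ 2) :
    arctan x < θ + (π / 2 - θ) * a := by
  have hcosθ : 0 < cos θ := cos_pos_of_mem_Ioo ⟨by linarith [pi_pos], hθ⟩
  have hR0 : 0 ≤ θ + (π / 2 - θ) * a := by nlinarith
  have hR : θ + (π / 2 - θ) * a < π / 2 := by nlinarith
  have hcos : cos (θ + (π / 2 - θ) * a) < √(1 - a ^ 2) * cos θ := by
    have h := sin_mul_lt_sqrt_mul_sin (b := 1 - a) (φ := π / 2 - θ) (by linarith) (by linarith)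
      (by linarith) (by linarith)
    rwa [show (1 - a) * (2 - (1 - a)) = 1 - a ^ 2 by ring, ← cos_pi_div_two_sub,
      ← cos_pi_div_two_sub, sub_sub_cancel,
      show π / 2 - (1 - a) * (π / 2 - θ) = θ + (π / 2 - θ) * a by ring] at h
  have hcos_sq : cos (θ + (π / 2 - θ) * a) ^ 2 < (1 - a ^ 2) * cos θ ^ 2 := by
    have h := pow_lt_pow_left₀ hcos (cos_nonneg_of_neg_pi_div_two_le_of_le
      (by linarith [pi_pos]) hR.le) two_ne_zero
    rwa [mul_pow, sq_sqrt (by nlinarith)] at h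
  have hone : (1 + x ^ 2) * ((1 - a ^ 2) * cos θ ^ 2) = 1 := by
    rw [← mul_assoc, hx, ← inv_one_add_tan_sq hcosθ.ne', mul_inv_cancel₀ (by positivity)]
  apply arctan_lt_of_cos_sq_mul_lt_one hR0 hR
  nlinarith [mul_lt_mul_of_pos_left hcos_sq (by positivity : (0 : ℝ) < 1 + x ^ 2)]

end Real

theorem stmt_3 (r θ2s : ℝ) (hr : 1 < r) (hr2 : r ≠ 2) (hθ2 : θ2s ∈ Set.Ico 0 (π/2)) :
    arctan (Real.sqrt ((r-2)^2 + r^2 * (tan θ2s)^2) / (2 * Real.sqrt (r-1)))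
      < θ2s + (π/2 - θ2s) * |1 - 2/r| := by
  have hr0 : 0 < r := by linarith
  have hr1 : 0 < r - 1 := by linarith
  have ha0 : 0 < |1 - 2 / r| := abs_pos.2 fun h => hr2 (by field_simp at h; linarith)
  have h2r : 2 / r < 2 := (div_lt_iff₀ hr0).2 (by linarith)
  have ha1 : |1 - 2 / r| < 1 := abs_lt.2 ⟨by linarith, by linarith [div_pos two_pos hr0]⟩
  apply arctan_lt_add_sub_mul ha0 ha1 hθ2.1 hθ2.2
  rw [div_pow, mul_pow, sq_sqrt (by positivity), sq_sqrt hr1.le, sq_abs]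
  field_simp [hr1.ne']
  ring
end

section
/- Let $\mathcal{H}$ be a complex Hilbert space and $B$ a bounded strictly accretive operator on $\mathcal{H}$, i.e., $\Re\langle B\xi,\xi\rangle \geq \lambda\|\xi\|^2$ for some $\lambda>0$. Let $B_s = (B+B^*)/2$ and $B_a = (B-B^*)/2$. Then the smallest angle $\theta_2^* \in [0,\pi/2)$ such that $|\Im\langle B\xi,\xi\rangle| \leq \tan\theta_2^* \cdot \Re\langle B\xi,\xi\rangle$ for all $\xi$ satisfies $\tan\theta_2^* = \|B_s^{-1/2} B_a B_s^{-1/2}\|$. -/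
/-!
Substituting `ξ = S η` turns `Re ⟪B ξ, ξ⟫ = ⟪B_s ξ, ξ⟫` into `‖η‖²` and `Im ⟪B ξ, ξ⟫` into
`Im ⟪T η, η⟫` with `T = S B_a S`, so the sector condition `|Im ⟪B ξ, ξ⟫| ≤ t Re ⟪B ξ, ξ⟫` says
exactly that the numerical radius of `T` is at most `t`. As `T` is skew-adjoint, `i T` is
self-adjoint and its norm equals its numerical radius; hence the admissible slopes `t` are exactly
those with `‖T‖ ≤ t`, and the minimal angle is `arctan ‖T‖`.
-/

open Real ContinuousLinearMap
open scoped ComplexInnerProductSpace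

theorem Real.tan_eq_of_minimal {a θ : ℝ} (ha : 0 ≤ a) (hθ : θ ∈ Set.Ico 0 (π / 2))
    (hle : a ≤ tan θ) (hmin : ∀ θ' ∈ Set.Ico 0 (π / 2), a ≤ tan θ' → θ ≤ θ') : tan θ = a := by
  have harctan : arctan a ∈ Set.Ico 0 (π / 2) := ⟨arctan_nonneg.2 ha, arctan_lt_pi_div_two a⟩
  have hθ_le : θ ≤ arctan a := hmin _ harctan (tan_arctan a).ge
  refine le_antisymm ?_ hle
  calc tan θ ≤ tan (arctan a) := by
        refine (strictMonoOn_tan.le_iff_le ⟨?_, hθ.2⟩ ⟨?_, harctan.2⟩).2 hθ_le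
        · linarith [hθ.1, pi_pos]
        · linarith [harctan.1, pi_pos]
    _ = a := tan_arctan a

theorem mul_mul_eq_one_of_mul_self_mul_eq_one {M : Type*} [Monoid M] {s b : M}
    (h₁ : s * s * b = 1) (h₂ : b * (s * s) = 1) : s * b * s = 1 :=
  calc s * b * s = s * b * s * (s * s * b) := by rw [h₁, mul_one]
    _ = s * (b * (s * s)) * (s * b) := by simp only [mul_assoc]
    _ = 1 := by rw [h₂, mul_one, ← mul_assoc, h₁]

namespace ContinuousLinearMap

variable {H : Type*} [NormedAddCommGroup H] [InnerProductSpace ℂ H] [CompleteSpace H]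

theorem norm_le_of_abs_im_inner_le {T : H →L[ℂ] H} (hT : T ∈ skewAdjoint (H →L[ℂ] H)) {c : ℝ}
    (hc : 0 ≤ c) (h : ∀ x, |(⟪T x, x⟫).im| ≤ c * ‖x‖ ^ 2) : ‖T‖ ≤ c := by
  have hIT : IsSelfAdjoint (Complex.I • T) := Complex.isSelfAdjoint_I_smul_iff_mem_skewAdjoint.2 hT
  have hnorm : ‖Complex.I • T‖ = ‖T‖ := by rw [norm_smul, Complex.norm_I, one_mul]
  rw [← hnorm, norm_eq_iSup_rayleighQuotient _ hIT.isSymmetric]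
  refine ciSup_le fun x => ?_
  have hre : (⟪(Complex.I • T) x, x⟫).re = (⟪T x, x⟫).im := by simp
  rw [rayleighQuotient, reApplyInnerSelf_apply, RCLike.re_to_complex, hre, abs_div, abs_sq]
  exact div_le_of_le_mul₀ (sq_nonneg _) hc (h x)

theorem inner_adjoint_apply_self (B : H →L[ℂ] H) (x : H) :
    ⟪adjoint B x, x⟫ = (starRingEnd ℂ) ⟪B x, x⟫ := by
  rw [adjoint_inner_left, inner_conj_symm]

theorem re_inner_symmPart_apply_self (B : H →L[ℂ] H) (x : H) :
    (⟪((1 / 2 : ℂ) • (B + adjoint B)) x, x⟫).re = (⟪B x, x⟫).re := by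
  simp only [smul_apply, add_apply, inner_smul_left, inner_add_left, inner_adjoint_apply_self]
  generalize ⟪B x, x⟫ = z
  simp [Complex.mul_re]
  ring

theorem im_inner_skewPart_apply_self (B : H →L[ℂ] H) (x : H) :
    (⟪((1 / 2 : ℂ) • (B - adjoint B)) x, x⟫).im = (⟪B x, x⟫).im := by
  simp only [smul_apply, sub_apply, inner_smul_left, inner_sub_left, inner_adjoint_apply_self]
  generalize ⟪B x, x⟫ = z
  simp [Complex.mul_im]
  ring

theorem skewPart_mem_skewAdjoint (B : H →L[ℂ] H) :
    (1 / 2 : ℂ) • (B - adjoint B) ∈ skewAdjoint (H →L[ℂ] H) := by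
  rw [skewAdjoint.mem_iff, star_smul, star_sub, star_eq_adjoint, ← star_eq_adjoint, star_star]
  simp [smul_sub]

theorem inner_comp_comp_apply_self_of_isSelfAdjoint {S : H →L[ℂ] H} (hS : IsSelfAdjoint S)
    (A : H →L[ℂ] H) (η : H) : ⟪(S ∘L A ∘L S) η, η⟫ = ⟪A (S η), S η⟫ :=
  hS.isSymmetric (A (S η)) η

theorem forall_abs_im_inner_le_iff_norm_le {B S : H →L[ℂ] H} (hS : IsSelfAdjoint S)
    (hSBS : S ∘L ((1 / 2 : ℂ) • (B + adjoint B)) ∘L S = 1) {t : ℝ} (ht : 0 ≤ t) :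
    (∀ ξ, |(⟪B ξ, ξ⟫).im| ≤ t * (⟪B ξ, ξ⟫).re) ↔
      ‖S ∘L ((1 / 2 : ℂ) • (B - adjoint B)) ∘L S‖ ≤ t := by
  set T := S ∘L ((1 / 2 : ℂ) • (B - adjoint B)) ∘L S
  have hre (η : H) : (⟪B (S η), S η⟫).re = ‖η‖ ^ 2 := by
    rw [← re_inner_symmPart_apply_self, ← inner_comp_comp_apply_self_of_isSelfAdjoint hS, hSBS,
      one_apply_eq_self, ← RCLike.re_to_complex, inner_self_eq_norm_sq]
  have him (η : H) : (⟪T η, η⟫).im = (⟪B (S η), S η⟫).im := by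
    rw [inner_comp_comp_apply_self_of_isSelfAdjoint hS, im_inner_skewPart_apply_self]
  have hT : T ∈ skewAdjoint (H →L[ℂ] H) := by
    have := skewAdjoint.conjugate (skewPart_mem_skewAdjoint B) S
    rwa [hS.star_eq] at this
  constructor
  · intro h
    refine norm_le_of_abs_im_inner_le hT ht fun η => ?_
    rw [him, ← hre]
    exact h (S η)
  · intro h ξ
    obtain ⟨η, rfl⟩ : ∃ η, S η = ξ :=
      ⟨((1 / 2 : ℂ) • (B + adjoint B)) (S ξ), by simpa using congr($hSBS ξ)⟩
    rw [← him, hre]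
    calc |(⟪T η, η⟫).im| ≤ ‖⟪T η, η⟫‖ := Complex.abs_im_le_norm _
      _ ≤ ‖T η‖ * ‖η‖ := norm_inner_le_norm _ _
      _ ≤ ‖T‖ * ‖η‖ * ‖η‖ := by gcongr; exact T.le_opNorm η
      _ ≤ t * ‖η‖ ^ 2 := by rw [mul_assoc, ← sq]; gcongr

end ContinuousLinearMap

theorem stmt_4_general {H : Type*} [NormedAddCommGroup H] [InnerProductSpace ℂ H] [CompleteSpace H]
    (B S : H →L[ℂ] H)
    (θ2s : ℝ) (hθmem : θ2s ∈ Set.Ico 0 (π/2))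
    (hθ : ∀ ξ : H, |(⟪B ξ, ξ⟫).im| ≤ tan θ2s * (⟪B ξ, ξ⟫).re)
    (hmin : ∀ θ' ∈ Set.Ico (0:ℝ) (π/2),
      (∀ ξ : H, |(⟪B ξ, ξ⟫).im| ≤ tan θ' * (⟪B ξ, ξ⟫).re) → θ2s ≤ θ')
    -- `S` is the positive square root of the inverse of `B_s = (B+B^*)/2`
    (hSsa : IsSelfAdjoint S)
    (hSinv₁ : (S ∘L S) ∘L ((1/2 : ℂ) • (B + adjoint B)) = 1)
    (hSinv₂ : ((1/2 : ℂ) • (B + adjoint B)) ∘L (S ∘L S) = 1) :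
    tan θ2s = ‖S ∘L ((1/2 : ℂ) • (B - adjoint B)) ∘L S‖ := by
  have hSBS : S ∘L ((1 / 2 : ℂ) • (B + adjoint B)) ∘L S = 1 :=
    mul_mul_eq_one_of_mul_self_mul_eq_one hSinv₁ hSinv₂
  have htan {θ : ℝ} (h : θ ∈ Set.Ico 0 (π / 2)) : 0 ≤ tan θ :=
    tan_nonneg_of_nonneg_of_le_pi_div_two h.1 h.2.le
  have hsector {θ : ℝ} (h : θ ∈ Set.Ico 0 (π / 2)) :=
    forall_abs_im_inner_le_iff_norm_le (B := B) hSsa hSBS (htan h)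
  exact tan_eq_of_minimal (norm_nonneg _) hθmem ((hsector hθmem).1 hθ) fun θ' h' hT =>
    hmin θ' h' ((hsector h').2 hT)

theorem stmt_4 {H : Type*} [NormedAddCommGroup H] [InnerProductSpace ℂ H] [CompleteSpace H]
    (B S : H →L[ℂ] H) (lam : ℝ) (hlam : 0 < lam)
    (hacc : ∀ ξ : H, lam * ‖ξ‖^2 ≤ (⟪B ξ, ξ⟫).re)
    (θ2s : ℝ) (hθmem : θ2s ∈ Set.Ico 0 (π/2))
    (hθ : ∀ ξ : H, |(⟪B ξ, ξ⟫).im| ≤ tan θ2s * (⟪B ξ, ξ⟫).re)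
    (hmin : ∀ θ' ∈ Set.Ico (0:ℝ) (π/2),
      (∀ ξ : H, |(⟪B ξ, ξ⟫).im| ≤ tan θ' * (⟪B ξ, ξ⟫).re) → θ2s ≤ θ')
    -- `S` is the positive square root of the inverse of `B_s = (B+B^*)/2`
    (hSsa : IsSelfAdjoint S) (hSpos : ∀ ξ : H, 0 ≤ (⟪S ξ, ξ⟫).re)
    (hSinv₁ : (S ∘L S) ∘L ((1/2 : ℂ) • (B + adjoint B)) = 1)
    (hSinv₂ : ((1/2 : ℂ) • (B + adjoint B)) ∘L (S ∘L S) = 1) :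
    tan θ2s = ‖S ∘L ((1/2 : ℂ) • (B - adjoint B)) ∘L S‖ :=
  stmt_4_general B S θ2s hθmem hθ hmin hSsa hSinv₁ hSinv₂
end

section
/- With $\mathcal{Q}$ the Nazarov–Treil Bellman function with parameters $p\geq 2$, $q=p/(p-1)$, $\delta>0$, the function $\mathcal{Q}$ is continuously differentiable on $\mathbb{R}^4$ and its complex gradients satisfy $2|(\partial_\zeta\mathcal{Q})(\zeta,\eta)| \leq (p+2\delta)\max\{|\zeta|^{p-1},|\eta|\}$ and $2|(\partial_\eta\mathcal{Q})(\zeta,\eta)| \leq (q+(2-q)\delta)|\eta|^{q-1}$ for all $(\zeta,\eta)\in\mathbb{R}^2\times\mathbb{R}^2$. -/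
/-- The Nazarov–Treil Bellman function with parameters `p`, `q`, `δ`,
viewed as a function on `ℝ² × ℝ²` (i.e. on `ℝ⁴`). -/
noncomputable def NTBellman (p q δ : ℝ)
    (v : EuclideanSpace ℝ (Fin 2) × EuclideanSpace ℝ (Fin 2)) : ℝ :=
  if ‖v.1‖ ^ p ≤ ‖v.2‖ ^ q then
    ‖v.1‖ ^ p + ‖v.2‖ ^ q + δ * (‖v.1‖ ^ (2:ℝ) * ‖v.2‖ ^ (2 - q))
  else
    ‖v.1‖ ^ p + ‖v.2‖ ^ q + δ * (2/p * ‖v.1‖ ^ p + (2/q - 1) * ‖v.2‖ ^ q)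

/-!
Write `Q = ‖ζ‖^p + ‖η‖^q + δ G`, where `G` is the mixed term `‖ζ‖²‖η‖^(2-q)` on
`{‖ζ‖^p ≤ ‖η‖^q}` and the weighted sum `(2/p)‖ζ‖^p + (2/q-1)‖η‖^q` elsewhere. Weighted AM–GM with
weights `2/p` and `2/q - 1` (which add up to `1`) puts the mixed term below the weighted sum
everywhere, with equality on the interface `‖ζ‖^p = ‖η‖^q`, where `‖ζ‖ = ‖η‖^(q-1)` and the two
gradients coincide. Squeezed between two functions that touch with a common derivative, `G` is
differentiable on the interface as well. Its gradient `(a ζ, b η)` is continuous: `a` glues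
continuously across the interface, and `b ‖η‖ ≤ (2-q)‖η‖^(q-1)` tames the singularity at `η = 0`.
These estimates, with `a ‖ζ‖ ≤ 2 max(‖ζ‖^(p-1), ‖η‖)`, give the bounds, as `2|∂_ζ Q| = |∇_ζ Q|`.
-/

open Real ContinuousLinearMap Filter Topology

lemma hasFDerivAt_of_le_of_le {X : Type*} [NormedAddCommGroup X] [NormedSpace ℝ X]
    {f g h : X → ℝ} {D : X →L[ℝ] ℝ} {x : X} (hf : HasFDerivAt f D x) (hh : HasFDerivAt h D x)
    (hfg : ∀ y, f y ≤ g y) (hgh : ∀ y, g y ≤ h y) (hfx : f x = g x) (hhx : h x = g x) :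
    HasFDerivAt g D x := by
  rw [hasFDerivAt_iff_isLittleO] at hf hh ⊢
  rw [hfx] at hf
  rw [hhx] at hh
  refine (Asymptotics.isBigO_of_le _ fun y => ?_).trans_isLittleO (hf.norm_left.add hh.norm_left)
  simp only [Real.norm_eq_abs]
  have := hfg y
  have := hgh y
  rw [abs_le, abs_of_nonneg (by positivity)]
  constructor <;> linarith [neg_abs_le (f y - g x - D (y - x)),
    le_abs_self (h y - g x - D (y - x)), abs_nonneg (f y - g x - D (y - x)),
    abs_nonneg (h y - g x - D (y - x))]

namespace NazarovTreil

section Exponents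

variable {p q r s : ℝ}

lemma conj_le_two (hp : 2 ≤ p) (hpq : p.HolderConjugate q) : q ≤ 2 := by
  rw [hpq.conjugate_eq, div_le_iff₀ hpq.sub_one_pos]
  linarith

lemma rpow_sub_one_rpow (hpq : p.HolderConjugate q) (hs : 0 ≤ s) : (s ^ (q - 1)) ^ p = s ^ q := by
  rw [← rpow_mul hs, hpq.symm.sub_one_mul_conj]

lemma rpow_le_rpow_iff_le_rpow_sub_one (hpq : p.HolderConjugate q) (hr : 0 ≤ r) (hs : 0 ≤ s) :
    r ^ p ≤ s ^ q ↔ r ≤ s ^ (q - 1) := by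
  rw [← rpow_sub_one_rpow hpq hs]
  exact rpow_le_rpow_iff hr (rpow_nonneg hs _) hpq.pos

lemma eq_rpow_sub_one_of_rpow_eq (hpq : p.HolderConjugate q) (hr : 0 ≤ r) (hs : 0 ≤ s)
    (h : r ^ p = s ^ q) : r = s ^ (q - 1) := by
  rwa [← rpow_sub_one_rpow hpq hs, rpow_left_inj hr (rpow_nonneg hs _) hpq.ne_zero] at h

lemma two_div_add_two_div_sub_one (hpq : p.HolderConjugate q) : 2 / p + (2 / q - 1) = 1 := by
  have := hpq.inv_add_inv_eq_one
  rw [div_eq_mul_inv, div_eq_mul_inv]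
  linear_combination 2 * this

lemma rpow_two_mul_rpow_two_sub (hpq : p.HolderConjugate q) (hr : 0 ≤ r) (hs : 0 ≤ s) :
    r ^ (2 : ℝ) * s ^ (2 - q) = (r ^ p) ^ (2 / p) * (s ^ q) ^ (2 / q - 1) := by
  rw [← rpow_mul hr, ← rpow_mul hs, mul_div_cancel₀ _ hpq.ne_zero, mul_sub, mul_one,
    mul_div_cancel₀ _ hpq.symm.ne_zero]

lemma rpow_sub_one_sq_mul_rpow_neg (hs : 0 < s) :
    (s ^ (q - 1)) ^ (2 : ℝ) * s ^ (-q) = s ^ (q - 2) := by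
  rw [← rpow_mul hs.le, ← rpow_add hs]
  ring_nf

lemma rpow_two_mul_rpow_neg_le_iff (hpq : p.HolderConjugate q) (hr : 0 ≤ r)
    (hs : 0 < s) : r ^ (2 : ℝ) * s ^ (-q) ≤ s ^ (q - 2) ↔ r ^ p ≤ s ^ q := by
  rw [← rpow_sub_one_sq_mul_rpow_neg hs, mul_le_mul_iff_left₀ (rpow_pos_of_pos hs _),
    rpow_le_rpow_iff hr (rpow_nonneg hs.le _) two_pos,
    rpow_le_rpow_iff_le_rpow_sub_one hpq hr hs.le]

lemma rpow_sub_two_mul_self (hr : 0 ≤ r) (hp : p ≠ 1) : r ^ (p - 2) * r = r ^ (p - 1) := by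
  rw [← rpow_add_one' hr (by contrapose! hp; linarith)]
  ring_nf

end Exponents

section Correction

variable {E F : Type*} [NormedAddCommGroup E] [NormedAddCommGroup F] {p q : ℝ}

variable (q) in
noncomputable def mixed (x : E × F) : ℝ := ‖x.1‖ ^ (2 : ℝ) * ‖x.2‖ ^ (2 - q)

variable (p q) in
noncomputable def weighted (x : E × F) : ℝ := 2 / p * ‖x.1‖ ^ p + (2 / q - 1) * ‖x.2‖ ^ q

variable (p q) in
noncomputable def correction (x : E × F) : ℝ :=
  if ‖x.1‖ ^ p ≤ ‖x.2‖ ^ q then mixed q x else weighted p q x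

variable (E F p q) in
noncomputable def coeffFst (x : E × F) : ℝ :=
  if ‖x.1‖ ^ p ≤ ‖x.2‖ ^ q then 2 * ‖x.2‖ ^ (2 - q) else 2 * ‖x.1‖ ^ (p - 2)

variable (E F p q) in
noncomputable def coeffSnd (x : E × F) : ℝ :=
  if ‖x.1‖ ^ p ≤ ‖x.2‖ ^ q then (2 - q) * (‖x.1‖ ^ (2 : ℝ) * ‖x.2‖ ^ (-q))
  else (2 - q) * ‖x.2‖ ^ (q - 2)

lemma mixed_nonneg (x : E × F) : 0 ≤ mixed q x := by
  unfold mixed; positivity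

lemma mixed_le_weighted (hp : 2 ≤ p) (hpq : p.HolderConjugate q) (x : E × F) :
    mixed q x ≤ weighted p q x := by
  have hq : 0 ≤ 2 / q - 1 := by
    rw [sub_nonneg, one_le_div₀ hpq.symm.pos]; exact conj_le_two hp hpq
  rw [mixed, weighted, rpow_two_mul_rpow_two_sub hpq (norm_nonneg _) (norm_nonneg _)]
  exact geom_mean_le_arith_mean2_weighted (by positivity) hq (by positivity) (by positivity)
    (two_div_add_two_div_sub_one hpq)

lemma mixed_eq_weighted_of_eq (hpq : p.HolderConjugate q) {x : E × F}
    (h : ‖x.1‖ ^ p = ‖x.2‖ ^ q) : mixed q x = weighted p q x := by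
  have hs : 0 ≤ ‖x.2‖ ^ q := by positivity
  rw [mixed, weighted, rpow_two_mul_rpow_two_sub hpq (norm_nonneg _) (norm_nonneg _), h,
    ← rpow_add' hs (by rw [two_div_add_two_div_sub_one hpq]; norm_num),
    two_div_add_two_div_sub_one hpq, rpow_one, ← add_mul, two_div_add_two_div_sub_one hpq,
    one_mul]

lemma mixed_le_correction (hp : 2 ≤ p) (hpq : p.HolderConjugate q) (x : E × F) :
    mixed q x ≤ correction p q x := by
  unfold correction; split_ifs
  exacts [le_rfl, mixed_le_weighted hp hpq x]

lemma correction_le_weighted (hp : 2 ≤ p) (hpq : p.HolderConjugate q) (x : E × F) :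
    correction p q x ≤ weighted p q x := by
  unfold correction; split_ifs
  exacts [mixed_le_weighted hp hpq x, le_rfl]

lemma eq_zero_of_norm_rpow_eq (hpq : p.HolderConjugate q) {x : E × F}
    (h : ‖x.1‖ ^ p = ‖x.2‖ ^ q) (hx : x.2 = 0) : x = 0 := by
  rw [hx, norm_zero, zero_rpow hpq.symm.ne_zero, rpow_eq_zero (norm_nonneg _) hpq.ne_zero,
    norm_eq_zero] at h
  exact Prod.ext h hx

lemma continuous_norm_fst_rpow {c : ℝ} (hc : 0 ≤ c) : Continuous fun y : E × F => ‖y.1‖ ^ c :=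
  continuous_fst.norm.rpow_const fun _ => Or.inr hc

lemma continuous_norm_snd_rpow {c : ℝ} (hc : 0 ≤ c) : Continuous fun y : E × F => ‖y.2‖ ^ c :=
  continuous_snd.norm.rpow_const fun _ => Or.inr hc

lemma continuous_coeffFst (hp : 2 ≤ p) (hpq : p.HolderConjugate q) :
    Continuous (coeffFst E F p q) := by
  refine Continuous.if_le
    (continuous_const.mul (continuous_norm_snd_rpow (by linarith [conj_le_two hp hpq])))
    (continuous_const.mul (continuous_norm_fst_rpow (by linarith)))
    (continuous_norm_fst_rpow hpq.nonneg) (continuous_norm_snd_rpow hpq.symm.nonneg)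
    fun x h => ?_
  rw [eq_rpow_sub_one_of_rpow_eq hpq (norm_nonneg _) (norm_nonneg _) h, ← rpow_mul (norm_nonneg _)]
  congr 2
  linear_combination -hpq.mul_eq_add

lemma coeffSnd_eq_min (hpq : p.HolderConjugate q) {x : E × F} (hx : x.2 ≠ 0) :
    coeffSnd E F p q x = (2 - q) * min (‖x.1‖ ^ (2 : ℝ) * ‖x.2‖ ^ (-q)) (‖x.2‖ ^ (q - 2)) := by
  have h := rpow_two_mul_rpow_neg_le_iff hpq (norm_nonneg x.1) (norm_pos_iff.mpr hx)
  unfold coeffSnd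
  split_ifs with hr
  · rw [min_eq_left (h.mpr hr)]
  · rw [min_eq_right (not_le.mp (mt h.mp hr)).le]

lemma continuousAt_coeffSnd (hpq : p.HolderConjugate q) {x : E × F} (hx : x.2 ≠ 0) :
    ContinuousAt (coeffSnd E F p q) x := by
  have hs : ‖x.2‖ ≠ 0 := norm_ne_zero_iff.mpr hx
  have hsnd : ContinuousAt (fun y : E × F => ‖y.2‖) x := continuous_snd.norm.continuousAt
  have hmin : ContinuousAt (fun y : E × F =>
      (2 - q) * min (‖y.1‖ ^ (2 : ℝ) * ‖y.2‖ ^ (-q)) (‖y.2‖ ^ (q - 2))) x :=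
    continuousAt_const.mul (((continuous_norm_fst_rpow zero_le_two).continuousAt.mul
      (hsnd.rpow_const (Or.inl hs))).min (hsnd.rpow_const (Or.inl hs)))
  refine hmin.congr_of_eventuallyEq (Filter.eventually_of_mem
    ((isOpen_ne_fun continuous_snd continuous_const).mem_nhds hx) fun y hy => ?_)
  exact coeffSnd_eq_min hpq hy

lemma coeffFst_nonneg (x : E × F) : 0 ≤ coeffFst E F p q x := by
  unfold coeffFst; split_ifs <;> positivity

lemma coeffSnd_nonneg (hp : 2 ≤ p) (hpq : p.HolderConjugate q) (x : E × F) :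
    0 ≤ coeffSnd E F p q x := by
  have := conj_le_two hp hpq
  unfold coeffSnd; split_ifs <;> exact mul_nonneg (by linarith) (by positivity)

lemma coeffSnd_mul_le (hp : 2 ≤ p) (hpq : p.HolderConjugate q) (x : E × F) :
    coeffSnd E F p q x * ‖x.2‖ ≤ (2 - q) * ‖x.2‖ ^ (q - 1) := by
  have hq := conj_le_two hp hpq
  rcases eq_or_ne x.2 0 with hx | hx
  · rw [hx, norm_zero, mul_zero]
    exact mul_nonneg (by linarith) (rpow_nonneg le_rfl _)
  have hs : 0 < ‖x.2‖ := norm_pos_iff.mpr hx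
  calc coeffSnd E F p q x * ‖x.2‖ ≤ (2 - q) * ‖x.2‖ ^ (q - 2) * ‖x.2‖ := by
        rw [coeffSnd_eq_min hpq hx]
        exact mul_le_mul_of_nonneg_right
          (mul_le_mul_of_nonneg_left (min_le_right _ _) (by linarith)) hs.le
    _ = (2 - q) * ‖x.2‖ ^ (q - 1) := by
        rw [mul_assoc, rpow_sub_two_mul_self hs.le hpq.symm.lt.ne']

lemma coeffFst_mul_le (hpq : p.HolderConjugate q) (x : E × F) :
    coeffFst E F p q x * ‖x.1‖ ≤ 2 * max (‖x.1‖ ^ (p - 1)) ‖x.2‖ := by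
  unfold coeffFst
  split_ifs with h
  · have hr := (rpow_le_rpow_iff_le_rpow_sub_one hpq (norm_nonneg _) (norm_nonneg _)).mp h
    calc 2 * ‖x.2‖ ^ (2 - q) * ‖x.1‖ ≤ 2 * (‖x.2‖ ^ (2 - q) * ‖x.2‖ ^ (q - 1)) := by
          rw [mul_assoc]; gcongr
      _ = 2 * ‖x.2‖ := by
          rw [← rpow_add' (norm_nonneg _) (by ring_nf; norm_num), sub_add_sub_cancel]
          norm_num
      _ ≤ 2 * max (‖x.1‖ ^ (p - 1)) ‖x.2‖ := by gcongr; exact le_max_right _ _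
  · rw [mul_assoc, rpow_sub_two_mul_self (norm_nonneg _) hpq.lt.ne']
    gcongr
    exact le_max_left _ _

lemma fst_gradient_mul_le (hpq : p.HolderConjugate q) {δ : ℝ} (hδ : 0 ≤ δ) (x : E × F) :
    (p * ‖x.1‖ ^ (p - 2) + δ * coeffFst E F p q x) * ‖x.1‖ ≤
      (p + 2 * δ) * max (‖x.1‖ ^ (p - 1)) ‖x.2‖ := by
  have hr : ‖x.1‖ ^ (p - 2) * ‖x.1‖ ≤ max (‖x.1‖ ^ (p - 1)) ‖x.2‖ :=
    (rpow_sub_two_mul_self (norm_nonneg _) hpq.lt.ne').trans_le (le_max_left _ _)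
  calc (p * ‖x.1‖ ^ (p - 2) + δ * coeffFst E F p q x) * ‖x.1‖
      = p * (‖x.1‖ ^ (p - 2) * ‖x.1‖) + δ * (coeffFst E F p q x * ‖x.1‖) := by ring
    _ ≤ p * max (‖x.1‖ ^ (p - 1)) ‖x.2‖ + δ * (2 * max (‖x.1‖ ^ (p - 1)) ‖x.2‖) :=
      add_le_add (mul_le_mul_of_nonneg_left hr hpq.nonneg)
        (mul_le_mul_of_nonneg_left (coeffFst_mul_le hpq x) hδ)
    _ = (p + 2 * δ) * max (‖x.1‖ ^ (p - 1)) ‖x.2‖ := by ring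

lemma snd_gradient_mul_le (hp : 2 ≤ p) (hpq : p.HolderConjugate q) {δ : ℝ} (hδ : 0 ≤ δ)
    (x : E × F) :
    (q * ‖x.2‖ ^ (q - 2) + δ * coeffSnd E F p q x) * ‖x.2‖ ≤
      (q + (2 - q) * δ) * ‖x.2‖ ^ (q - 1) := by
  have hs := rpow_sub_two_mul_self (norm_nonneg x.2) hpq.symm.lt.ne'
  calc (q * ‖x.2‖ ^ (q - 2) + δ * coeffSnd E F p q x) * ‖x.2‖
      = q * (‖x.2‖ ^ (q - 2) * ‖x.2‖) + δ * (coeffSnd E F p q x * ‖x.2‖) := by ring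
    _ ≤ q * ‖x.2‖ ^ (q - 1) + δ * ((2 - q) * ‖x.2‖ ^ (q - 1)) := by
      rw [hs]
      exact add_le_add le_rfl (mul_le_mul_of_nonneg_left (coeffSnd_mul_le hp hpq x) hδ)
    _ = (q + (2 - q) * δ) * ‖x.2‖ ^ (q - 1) := by ring

variable [InnerProductSpace ℝ F]

lemma continuous_coeffSnd_smul_innerSL (hp : 2 ≤ p) (hpq : p.HolderConjugate q) :
    Continuous fun x : E × F => coeffSnd E F p q x • innerSL ℝ x.2 := by
  refine continuous_iff_continuousAt.mpr fun x => ?_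
  rcases eq_or_ne x.2 0 with hx | hx
  -- `coeffSnd` blows up as `η → 0` when `q < 2`; only its product with `innerSL ℝ η` is tame.
  · have hbound (y : E × F) : ‖coeffSnd E F p q y • innerSL ℝ y.2‖ ≤ (2 - q) * ‖y.2‖ ^ (q - 1) := by
      rw [norm_smul, innerSL_apply_norm, Real.norm_of_nonneg (coeffSnd_nonneg hp hpq y)]
      exact coeffSnd_mul_le hp hpq y
    have hlim : Tendsto (fun y : E × F => (2 - q) * ‖y.2‖ ^ (q - 1)) (𝓝 x) (𝓝 0) := by
      simpa [hx, hpq.symm.sub_one_ne_zero] using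
        ((continuous_norm_snd_rpow hpq.symm.sub_one_pos.le).const_mul (2 - q)).tendsto x
    rw [ContinuousAt, hx, map_zero, smul_zero]
    exact squeeze_zero_norm hbound hlim
  exact (continuousAt_coeffSnd hpq hx).smul
    ((innerSL ℝ).continuous.comp continuous_snd).continuousAt

variable [InnerProductSpace ℝ E]

variable (E F) in
noncomputable def radialForm (a b : ℝ) (x : E × F) : E × F →L[ℝ] ℝ :=
  a • (innerSL ℝ x.1).comp (fst ℝ E F) + b • (innerSL ℝ x.2).comp (snd ℝ E F)

@[simp]
lemma radialForm_apply (a b : ℝ) (x v : E × F) :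
    radialForm E F a b x v = a * inner ℝ x.1 v.1 + b * inner ℝ x.2 v.2 := by
  simp [radialForm]

lemma hasFDerivAt_radialForm_fst {g : E → ℝ} {c : ℝ} {x : E × F}
    (hg : HasFDerivAt g (c • innerSL ℝ x.1) x.1) :
    HasFDerivAt (fun y : E × F => g y.1) (radialForm E F c 0 x) x :=
  (hg.comp x hasFDerivAt_fst).congr_fderiv (by ext v <;> simp)

lemma hasFDerivAt_radialForm_snd {g : F → ℝ} {c : ℝ} {x : E × F}
    (hg : HasFDerivAt g (c • innerSL ℝ x.2) x.2) :
    HasFDerivAt (fun y : E × F => g y.2) (radialForm E F 0 c x) x :=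
  (hg.comp x hasFDerivAt_snd).congr_fderiv (by ext v <;> simp)

lemma hasFDerivAt_norm_rpow_of_ne_zero {x : E} (hx : x ≠ 0) (c : ℝ) :
    HasFDerivAt (fun y : E => ‖y‖ ^ c) ((c * ‖x‖ ^ (c - 2)) • innerSL ℝ x) x := by
  have hx2 : ‖x‖ ^ (2 : ℝ) ≠ 0 := by positivity
  have h := (hasFDerivAt_norm_rpow x one_lt_two).rpow_const (p := c / 2) (Or.inl hx2)
  simp only [← rpow_mul (norm_nonneg _), mul_div_cancel₀ c two_ne_zero, smul_smul] at h
  convert h using 2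
  rw [sub_self, rpow_zero]
  ring_nf

lemma hasFDerivAt_powerSum (hp : 1 < p) (hq : 1 < q) (c d : ℝ) (x : E × F) :
    HasFDerivAt (fun y : E × F => c * ‖y.1‖ ^ p + d * ‖y.2‖ ^ q)
      (radialForm E F (c * p * ‖x.1‖ ^ (p - 2)) (d * q * ‖x.2‖ ^ (q - 2)) x) x :=
  (((hasFDerivAt_radialForm_fst (hasFDerivAt_norm_rpow x.1 hp)).const_mul c).add
    ((hasFDerivAt_radialForm_snd (hasFDerivAt_norm_rpow x.2 hq)).const_mul d)).congr_fderiv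
    (by ext v <;> simp <;> ring)

lemma contDiff_powerSum (hp : 1 < p) (hq : 1 < q) (c d : ℝ) :
    ContDiff ℝ 1 (fun y : E × F => c * ‖y.1‖ ^ p + d * ‖y.2‖ ^ q) :=
  (contDiff_const.mul ((contDiff_norm_rpow hp).comp contDiff_fst)).add
    (contDiff_const.mul ((contDiff_norm_rpow hq).comp contDiff_snd))

lemma hasFDerivAt_weighted (hpq : p.HolderConjugate q) (x : E × F) :
    HasFDerivAt (weighted p q)
      (radialForm E F (2 * ‖x.1‖ ^ (p - 2)) ((2 - q) * ‖x.2‖ ^ (q - 2)) x) x := by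
  refine (hasFDerivAt_powerSum hpq.lt hpq.symm.lt (2 / p) (2 / q - 1) x).congr_fderiv ?_
  congr 2
  · field_simp [hpq.ne_zero]
  · field_simp [hpq.symm.ne_zero]

lemma hasFDerivAt_mixed {x : E × F} (hx : x.2 ≠ 0) :
    HasFDerivAt (mixed q)
      (radialForm E F (2 * ‖x.2‖ ^ (2 - q)) ((2 - q) * (‖x.1‖ ^ (2 : ℝ) * ‖x.2‖ ^ (-q))) x) x := by
  have h := (hasFDerivAt_radialForm_fst (F := F) (x := x)
    (hasFDerivAt_norm_rpow x.1 one_lt_two)).mul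
    (hasFDerivAt_radialForm_snd (hasFDerivAt_norm_rpow_of_ne_zero hx (2 - q)))
  refine h.congr_fderiv ?_
  ext v <;> simp <;> ring_nf

@[simp]
lemma radialForm_zero (a b : ℝ) : radialForm E F a b 0 = 0 := by
  ext v <;> simp

lemma radialForm_of_boundary (hpq : p.HolderConjugate q) {x : E × F} (h : ‖x.1‖ ^ p = ‖x.2‖ ^ q) :
    radialForm E F (2 * ‖x.2‖ ^ (2 - q)) ((2 - q) * (‖x.1‖ ^ (2 : ℝ) * ‖x.2‖ ^ (-q))) x =
      radialForm E F (2 * ‖x.1‖ ^ (p - 2)) ((2 - q) * ‖x.2‖ ^ (q - 2)) x := by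
  rcases eq_or_ne x.2 0 with hx | hx
  · obtain rfl := eq_zero_of_norm_rpow_eq hpq h hx
    simp
  · have hr := eq_rpow_sub_one_of_rpow_eq hpq (norm_nonneg _) (norm_nonneg _) h
    have hs : 0 < ‖x.2‖ := norm_pos_iff.mpr hx
    rw [hr, rpow_sub_one_sq_mul_rpow_neg hs, ← rpow_mul hs.le]
    congr 3
    linear_combination -hpq.mul_eq_add

lemma hasFDerivAt_correction_zero (hp : 2 ≤ p) (hpq : p.HolderConjugate q) :
    HasFDerivAt (correction p q) (0 : E × F →L[ℝ] ℝ) 0 := by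
  have hw : HasFDerivAt (weighted p q) (0 : E × F →L[ℝ] ℝ) 0 := by
    simpa using hasFDerivAt_weighted (E := E) (F := F) hpq 0
  refine hasFDerivAt_of_le_of_le (hasFDerivAt_const 0 0) hw
    (fun y => (mixed_nonneg y).trans (mixed_le_correction hp hpq y))
    (correction_le_weighted hp hpq) ?_ ?_
  all_goals simp [correction, mixed, weighted, hpq.ne_zero, hpq.symm.ne_zero]

lemma hasFDerivAt_correction_of_eq (hp : 2 ≤ p) (hpq : p.HolderConjugate q) {x : E × F}
    (h : ‖x.1‖ ^ p = ‖x.2‖ ^ q) :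
    HasFDerivAt (correction p q)
      (radialForm E F (coeffFst E F p q x) (coeffSnd E F p q x) x) x := by
  rcases eq_or_ne x.2 0 with hx | hx
  · obtain rfl := eq_zero_of_norm_rpow_eq hpq h hx
    simpa using hasFDerivAt_correction_zero hp hpq
  simp only [coeffFst, coeffSnd, if_pos h.le]
  refine hasFDerivAt_of_le_of_le (hasFDerivAt_mixed hx)
    ((hasFDerivAt_weighted hpq x).congr_fderiv (radialForm_of_boundary hpq h).symm)
    (mixed_le_correction hp hpq) (correction_le_weighted hp hpq) (if_pos h.le).symm ?_
  rw [correction, if_pos h.le, mixed_eq_weighted_of_eq hpq h]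

lemma hasFDerivAt_correction (hp : 2 ≤ p) (hpq : p.HolderConjugate q) (x : E × F) :
    HasFDerivAt (correction p q)
      (radialForm E F (coeffFst E F p q x) (coeffSnd E F p q x) x) x := by
  have hp₀ := continuous_norm_fst_rpow (E := E) (F := F) hpq.nonneg
  have hq₀ := continuous_norm_snd_rpow (E := E) (F := F) hpq.symm.nonneg
  rcases lt_trichotomy (‖x.1‖ ^ p) (‖x.2‖ ^ q) with hlt | heq | hgt
  · have hx : x.2 ≠ 0 := by
      rintro h0
      rw [h0, norm_zero, zero_rpow hpq.symm.ne_zero] at hlt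
      exact (rpow_nonneg (norm_nonneg _) _).not_gt hlt
    have hev : correction p q =ᶠ[𝓝 x] mixed q :=
      Filter.eventually_of_mem ((isOpen_lt hp₀ hq₀).mem_nhds hlt) fun y hy => if_pos (le_of_lt hy)
    simp only [coeffFst, coeffSnd, if_pos hlt.le]
    exact (hasFDerivAt_mixed hx).congr_of_eventuallyEq hev
  · exact hasFDerivAt_correction_of_eq hp hpq heq
  · have hev : correction p q =ᶠ[𝓝 x] weighted p q :=
      Filter.eventually_of_mem ((isOpen_lt hq₀ hp₀).mem_nhds hgt) fun y hy => if_neg (not_le.mpr hy)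
    simp only [coeffFst, coeffSnd, if_neg (not_le.mpr hgt)]
    exact (hasFDerivAt_weighted hpq x).congr_of_eventuallyEq hev

lemma continuous_radialForm {a b : E × F → ℝ} (ha : Continuous a)
    (hb : Continuous fun x => b x • innerSL ℝ x.2) :
    Continuous fun x => radialForm E F (a x) (b x) x := by
  simp only [radialForm, ← smul_comp]
  exact ((ha.smul ((innerSL ℝ).continuous.comp continuous_fst)).clm_comp continuous_const).add
    (hb.clm_comp continuous_const)

lemma contDiff_correction (hp : 2 ≤ p) (hpq : p.HolderConjugate q) :
    ContDiff ℝ 1 (correction (E := E) (F := F) p q) :=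
  contDiff_one_iff_hasFDerivAt.mpr ⟨_, continuous_radialForm (continuous_coeffFst hp hpq)
    (continuous_coeffSnd_smul_innerSL hp hpq), hasFDerivAt_correction hp hpq⟩

lemma radialForm_single_fst {ι : Type*} [Fintype ι] [DecidableEq ι] (a b : ℝ)
    (x : EuclideanSpace ℝ ι × EuclideanSpace ℝ ι) (i : ι) :
    radialForm _ _ a b x (EuclideanSpace.single i 1, 0) = a * x.1 i := by
  simp [EuclideanSpace.inner_single_right]

lemma radialForm_single_snd {ι : Type*} [Fintype ι] [DecidableEq ι] (a b : ℝ)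
    (x : EuclideanSpace ℝ ι × EuclideanSpace ℝ ι) (i : ι) :
    radialForm _ _ a b x (0, EuclideanSpace.single i 1) = b * x.2 i := by
  simp [EuclideanSpace.inner_single_right]

end Correction

end NazarovTreil

open NazarovTreil

local notation "ℝ²" => EuclideanSpace ℝ (Fin 2)

lemma NTBellman_eq (p q δ : ℝ) :
    NTBellman p q δ = fun x => (‖x.1‖ ^ p + ‖x.2‖ ^ q) + δ * correction p q x := by
  ext x
  unfold NTBellman correction mixed weighted
  split_ifs <;> ring

lemma contDiff_NTBellman {p q : ℝ} (hp : 2 ≤ p) (hpq : p.HolderConjugate q) (δ : ℝ) :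
    ContDiff ℝ 1 (NTBellman p q δ) := by
  rw [NTBellman_eq]
  simpa using (contDiff_powerSum (E := ℝ²) (F := ℝ²) hpq.lt hpq.symm.lt 1 1).add
    (contDiff_const.mul (contDiff_correction hp hpq))

lemma hasFDerivAt_NTBellman {p q : ℝ} (hp : 2 ≤ p) (hpq : p.HolderConjugate q) (δ : ℝ)
    (x : ℝ² × ℝ²) :
    HasFDerivAt (NTBellman p q δ)
      (radialForm _ _ (p * ‖x.1‖ ^ (p - 2) + δ * coeffFst _ _ p q x)
        (q * ‖x.2‖ ^ (q - 2) + δ * coeffSnd _ _ p q x) x) x := by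
  rw [NTBellman_eq]
  have h := (hasFDerivAt_powerSum hpq.lt hpq.symm.lt 1 1 x).add
    ((hasFDerivAt_correction hp hpq x).const_mul δ)
  simp only [one_mul] at h
  exact h.congr_fderiv (by ext v <;> simp <;> ring)

lemma two_mul_norm_half_mul_sub_I_mul (c : ℝ) (ζ : ℝ²) :
    2 * ‖(1 / 2 : ℂ) * (((c * ζ 0 : ℝ) : ℂ) - Complex.I * ((c * ζ 1 : ℝ) : ℂ))‖ = |c| * ‖ζ‖ := by
  have h : ((c * ζ 0 : ℝ) : ℂ) - Complex.I * ((c * ζ 1 : ℝ) : ℂ) = (c : ℂ) * ⟨ζ 0, -ζ 1⟩ := by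
    apply Complex.ext <;> simp
  have hζ : ‖(⟨ζ 0, -ζ 1⟩ : ℂ)‖ = ‖ζ‖ := by
    rw [Complex.norm_def, Complex.normSq_mk, EuclideanSpace.norm_eq, Fin.sum_univ_two]
    simp only [Real.norm_eq_abs, sq_abs]
    ring_nf
  rw [h, norm_mul, norm_mul, Complex.norm_real, Real.norm_eq_abs, hζ]
  norm_num
  ring

theorem stmt_10 (p q δ : ℝ) (hp : 2 ≤ p) (hq : q = p / (p - 1)) (hδ : 0 < δ) :
    ContDiff ℝ 1 (NTBellman p q δ) ∧
    ∀ ζ η : EuclideanSpace ℝ (Fin 2),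
      2 * ‖(1/2) *
          ((fderiv ℝ (NTBellman p q δ) (ζ, η) (EuclideanSpace.single 0 1, 0) : ℂ)
            - Complex.I *
              (fderiv ℝ (NTBellman p q δ) (ζ, η) (EuclideanSpace.single 1 1, 0) : ℂ))‖
        ≤ (p + 2*δ) * max (‖ζ‖ ^ (p - 1)) ‖η‖ ∧
      2 * ‖(1/2) *
          ((fderiv ℝ (NTBellman p q δ) (ζ, η) (0, EuclideanSpace.single 0 1) : ℂ)
            - Complex.I *
              (fderiv ℝ (NTBellman p q δ) (ζ, η) (0, EuclideanSpace.single 1 1) : ℂ))‖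
        ≤ (q + (2 - q)*δ) * ‖η‖ ^ (q - 1) := by
  have hpq : p.HolderConjugate q := (holderConjugate_iff_eq_conjExponent (by linarith)).mpr hq
  refine ⟨contDiff_NTBellman hp hpq δ, fun ζ η => ?_⟩
  rw [(hasFDerivAt_NTBellman hp hpq δ (ζ, η)).fderiv]
  simp only [radialForm_single_fst, radialForm_single_snd, two_mul_norm_half_mul_sub_I_mul]
  rw [abs_of_nonneg (add_nonneg (mul_nonneg hpq.nonneg (rpow_nonneg (norm_nonneg _) _))
      (mul_nonneg hδ.le (coeffFst_nonneg _))),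
    abs_of_nonneg (add_nonneg (mul_nonneg hpq.symm.nonneg (rpow_nonneg (norm_nonneg _) _))
      (mul_nonneg hδ.le (coeffSnd_nonneg hp hpq _)))]
  exact ⟨fst_gradient_mul_le hpq hδ.le (ζ, η), snd_gradient_mul_le hp hpq hδ.le (ζ, η)⟩
end

section
/- Fix $r \geq 2$ and a bounded strictly accretive operator $B$ on the complexification of a real Hilbert space $\mathcal{H}$, with $B$ the complexification of a real operator. For $z \in \mathbb{C}$, $\xi \in \mathcal{H}^{\mathbb{C}}$, the second-derivative form of $F_r(s)=|s|^r$ satisfies the explicit formula $H^B_{F_r}[z;\xi] = r|z|^{r-4}\big(\langle B_s \Im(\bar z\xi), \Im(\bar z\xi)\rangle + (r-1)\langle B_s \Re(\bar z\xi), \Re(\bar z\xi)\rangle\big)$ for $z \neq 0$, where $B_s$ is the symmetric part of $B$. -/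
/-! Away from the origin `∇|u|^r = r|u|^(r-2) u`, so the Hessian of `F_r` at `s ≠ 0` is
`r|s|^(r-4) ((r-2) s sᵀ + |s|² I)`. Because `B` is the complexification of the real operator `Br`,
`Re ⟨B_s (J v), J v⟩ = ⟨Br v, v⟩`, and the formula follows from the Lagrange-type identity
`|s|² (q ξ₀ + q ξ₁) = q (s₀ξ₀ + s₁ξ₁) + q (s₀ξ₁ - s₁ξ₀)` for the quadratic form `q v = ⟨Br v, v⟩`,
which holds without any symmetry of `Br` because the cross terms cancel. -/

open ContinuousLinearMap
open scoped RealInnerProductSpace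

/-- The generalized Hessian form `H^D_Ψ[s;ξ] = ⟨(Hess(Ψ;s)⊗I)ξ, M(D)ξ⟩`, where the
operator `D` on the complexification of `H` has real part `Dr` and imaginary part `Di`,
and `h` is the Hessian matrix. -/
noncomputable def HForm {H : Type*} [NormedAddCommGroup H] [InnerProductSpace ℝ H]
    (h : Fin 2 → Fin 2 → ℝ) (Dr Di : H →L[ℝ] H) (ξ : Fin 2 → H) : ℝ :=
  ⟪h 0 0 • ξ 0 + h 0 1 • ξ 1, Dr (ξ 0) - Di (ξ 1)⟫ +
    ⟪h 1 0 • ξ 0 + h 1 1 • ξ 1, Di (ξ 0) + Dr (ξ 1)⟫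

section NormRpow

variable {E : Type*} [NormedAddCommGroup E] [InnerProductSpace ℝ E]

theorem hasStrictFDerivAt_norm_rpow_of_ne_zero (p : ℝ) {x : E} (hx : x ≠ 0) :
    HasStrictFDerivAt (fun u : E => ‖u‖ ^ p) ((p * ‖x‖ ^ (p - 2)) • innerSL ℝ x) x := by
  convert! (hasStrictFDerivAt_norm_sq x).rpow_const (p := p / 2) (by simp [hx]) using 1
  · ext u
    simp_rw [← Real.rpow_natCast_mul (norm_nonneg _)]
    ring_nf
  · simp_rw [← Real.rpow_natCast_mul (norm_nonneg _), ← Nat.cast_smul_eq_nsmul ℝ, smul_smul]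
    ring_nf

theorem fderiv_fderiv_norm_rpow_apply (p : ℝ) {x : E} (hx : x ≠ 0) (v w : E) :
    fderiv ℝ (fun t => fderiv ℝ (fun u : E => ‖u‖ ^ p) t v) x w
      = p * ‖x‖ ^ (p - 4) * ((p - 2) * ⟪x, v⟫ * ⟪x, w⟫ + ‖x‖ ^ 2 * ⟪v, w⟫) := by
  have hfirst : (fun t => fderiv ℝ (fun u : E => ‖u‖ ^ p) t v)
      =ᶠ[nhds x] fun t => p * ‖t‖ ^ (p - 2) * ⟪t, v⟫ := by
    filter_upwards [isOpen_compl_singleton.mem_nhds hx] with t ht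
    rw [(hasStrictFDerivAt_norm_rpow_of_ne_zero p ht).hasFDerivAt.fderiv]
    simp [mul_assoc]
  have hderiv : HasFDerivAt (fun t : E => p * ‖t‖ ^ (p - 2) * ⟪t, v⟫) _ x :=
    ((hasStrictFDerivAt_norm_rpow_of_ne_zero (p - 2) hx).hasFDerivAt.const_mul p).mul
      ((hasFDerivAt_id x).inner ℝ (hasFDerivAt_const v x))
  rw [hfirst.fderiv_eq, hderiv.fderiv]
  have hnorm : ‖x‖ ^ (p - 2) = ‖x‖ ^ (p - 4) * ‖x‖ ^ 2 := by
    rw [← Real.rpow_natCast, ← Real.rpow_add (norm_pos_iff.mpr hx)]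
    ring_nf
  simp [hnorm, real_inner_comm w v, show p - 2 - 2 = p - 4 by ring]
  ring

end NormRpow

theorem fderiv_fderiv_norm_rpow_single {n : Type*} [Fintype n] [DecidableEq n] (p : ℝ)
    {x : EuclideanSpace ℝ n} (hx : x ≠ 0) (i j : n) :
    fderiv ℝ (fun t => fderiv ℝ (fun u : EuclideanSpace ℝ n => ‖u‖ ^ p) t
        (EuclideanSpace.single i 1)) x (EuclideanSpace.single j 1)
      = p * ‖x‖ ^ (p - 4) * ((p - 2) * x i * x j + ‖x‖ ^ 2 * if i = j then 1 else 0) := by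
  rw [fderiv_fderiv_norm_rpow_apply p hx]
  simp [EuclideanSpace.inner_single_right, eq_comm]

section HessianForm

variable {H : Type*} [NormedAddCommGroup H] [InnerProductSpace ℝ H]

theorem HForm_zero_eq_of_radial_hessian (A : H →L[ℝ] H) (h : Fin 2 → Fin 2 → ℝ) (c k : ℝ)
    (s : Fin 2 → ℝ)
    (hh : ∀ i j, h i j = c * ((k - 1) * s i * s j + (s 0 ^ 2 + s 1 ^ 2) * if i = j then 1 else 0))
    (ξ : Fin 2 → H) :
    HForm h A 0 ξ = c * (⟪A (s 0 • ξ 1 - s 1 • ξ 0), s 0 • ξ 1 - s 1 • ξ 0⟫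
      + k * ⟪A (s 0 • ξ 0 + s 1 • ξ 1), s 0 • ξ 0 + s 1 • ξ 1⟫) := by
  simp only [HForm, hh, Fin.isValue, ↓reduceIte, zero_ne_one, one_ne_zero, mul_one, mul_zero,
    add_zero, zero_apply, sub_zero, zero_add, map_sub, map_add, map_smul, inner_add_left,
    inner_sub_left, inner_add_right, inner_sub_right, real_inner_smul_left, real_inner_smul_right]
  rw [real_inner_comm (A (ξ 0)) (ξ 0), real_inner_comm (A (ξ 0)) (ξ 1),
    real_inner_comm (A (ξ 1)) (ξ 0), real_inner_comm (A (ξ 1)) (ξ 1)]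
  ring

end HessianForm

theorem re_inner_symmPart_apply_eq {H HC : Type*}
    [NormedAddCommGroup H] [InnerProductSpace ℝ H]
    [NormedAddCommGroup HC] [InnerProductSpace ℂ HC] [CompleteSpace HC]
    (J : H →ₗ[ℝ] HC) (hJ : ∀ x y : H, (inner ℂ (J x) (J y) : ℂ) = ((⟪x, y⟫ : ℝ) : ℂ))
    (B : HC →L[ℂ] HC) (A : H →L[ℝ] H) (hB : ∀ x : H, B (J x) = J (A x)) (v : H) :
    (inner ℂ (((1/2 : ℂ) • (B + adjoint B)) (J v)) (J v) : ℂ).re = ⟪A v, v⟫ := by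
  rw [smul_apply, add_apply, inner_smul_left, inner_add_left, adjoint_inner_left, hB, hJ, hJ,
    real_inner_comm v, ← Complex.ofReal_add, ← two_mul]
  simp

theorem stmt_17_general {H HC : Type*}
    [NormedAddCommGroup H] [InnerProductSpace ℝ H]
    [NormedAddCommGroup HC] [InnerProductSpace ℂ HC] [CompleteSpace HC]
    -- `J` realises `HC` as the complexification of `H`
    (J : H →ₗ[ℝ] HC)
    (hJ : ∀ x y : H, (inner ℂ (J x) (J y) : ℂ) = ((⟪x, y⟫ : ℝ) : ℂ))
    -- `B` is a bounded strictly accretive operator on `HC`, the complexification of a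
    -- real operator with real part `Br` (and vanishing imaginary part `Bi`)
    (B : HC →L[ℂ] HC) (Br Bi : H →L[ℝ] H)
    (hB : ∀ x : H, B (J x) = J (Br x) + Complex.I • J (Bi x)) (hBi : Bi = 0)
    (r : ℝ)
    (s : EuclideanSpace ℝ (Fin 2)) (hs : s ≠ 0) (ξ : Fin 2 → H) :
    HForm
      (fun i j =>
        fderiv ℝ
          (fun t : EuclideanSpace ℝ (Fin 2) =>
            fderiv ℝ (fun u : EuclideanSpace ℝ (Fin 2) => ‖u‖ ^ r) t
              (EuclideanSpace.single i 1))
          s (EuclideanSpace.single j 1))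
      Br Bi ξ
    = r * ‖s‖ ^ (r - 4) *
        ((inner ℂ (((1/2 : ℂ) • (B + adjoint B)) (J (s 0 • ξ 1 - s 1 • ξ 0)))
            (J (s 0 • ξ 1 - s 1 • ξ 0)) : ℂ).re
          + (r - 1) *
            (inner ℂ (((1/2 : ℂ) • (B + adjoint B)) (J (s 0 • ξ 0 + s 1 • ξ 1)))
              (J (s 0 • ξ 0 + s 1 • ξ 1)) : ℂ).re) := by
  have hBr : ∀ x : H, B (J x) = J (Br x) := by simp [hB, hBi]
  have hnorm : ‖s‖ ^ 2 = s 0 ^ 2 + s 1 ^ 2 := by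
    simp [EuclideanSpace.real_norm_sq_eq, Fin.sum_univ_two]
  rw [re_inner_symmPart_apply_eq J hJ B Br hBr, re_inner_symmPart_apply_eq J hJ B Br hBr, hBi]
  refine HForm_zero_eq_of_radial_hessian Br _ _ _ s (fun i j => ?_) ξ
  rw [fderiv_fderiv_norm_rpow_single r hs, hnorm]
  ring

theorem stmt_17 {H HC : Type*}
    [NormedAddCommGroup H] [InnerProductSpace ℝ H] [CompleteSpace H]
    [NormedAddCommGroup HC] [InnerProductSpace ℂ HC] [CompleteSpace HC]
    -- `J` realises `HC` as the complexification of `H`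
    (J : H →ₗ[ℝ] HC)
    (hJ : ∀ x y : H, (inner ℂ (J x) (J y) : ℂ) = ((⟪x, y⟫ : ℝ) : ℂ))
    (hsurj : ∀ v : HC, ∃ x y : H, v = J x + Complex.I • J y)
    -- `B` is a bounded strictly accretive operator on `HC`, the complexification of a
    -- real operator with real part `Br` (and vanishing imaginary part `Bi`)
    (B : HC →L[ℂ] HC) (Br Bi : H →L[ℝ] H)
    (hB : ∀ x : H, B (J x) = J (Br x) + Complex.I • J (Bi x)) (hBi : Bi = 0)
    (lam : ℝ) (hlam : 0 < lam)
    (hacc : ∀ ξ : HC, lam * ‖ξ‖^2 ≤ (inner ℂ (B ξ) ξ : ℂ).re)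
    (r : ℝ) (hr : 2 ≤ r)
    (s : EuclideanSpace ℝ (Fin 2)) (hs : s ≠ 0) (ξ : Fin 2 → H) :
    HForm
      (fun i j =>
        fderiv ℝ
          (fun t : EuclideanSpace ℝ (Fin 2) =>
            fderiv ℝ (fun u : EuclideanSpace ℝ (Fin 2) => ‖u‖ ^ r) t
              (EuclideanSpace.single i 1))
          s (EuclideanSpace.single j 1))
      Br Bi ξ
    = r * ‖s‖ ^ (r - 4) *
        ((inner ℂ (((1/2 : ℂ) • (B + adjoint B)) (J (s 0 • ξ 1 - s 1 • ξ 0)))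
            (J (s 0 • ξ 1 - s 1 • ξ 0)) : ℂ).re
          + (r - 1) *
            (inner ℂ (((1/2 : ℂ) • (B + adjoint B)) (J (s 0 • ξ 0 + s 1 • ξ 1)))
              (J (s 0 • ξ 0 + s 1 • ξ 1)) : ℂ).re) :=
  stmt_17_general J hJ B Br Bi hB hBi r s hs ξ
end
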